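/- Let F = x + F₂ + F₃ + F₄ and G = z + G₂ + ⋯ + G₆ with Fᵢ, Gᵢ ∈ ℂ[x,y,z] homogeneous of degree i. Suppose F₄ = h⁴, G₆ = αh⁶, F₂ = h·F̄₁, F₃ = b·h³, G₅ = ((3/2)αb + β)h⁵, G₄ = E·h⁴ + (3/2)α·h³·F̄₁, G₃ = K·h³ + L·h²·F̄₁ + (3/2)α·h²·x, and G₂ = A·h·x + B·h² + C·F̄₁² + D·h·F̄₁, where h ≠ 0 and F̄₁ are homogeneous of degree 1, α ∈ ℂ with α ≠ 0, β, a, b, c, d ∈ ℂ, and A = (5/4)β + (3/4)αb, B = −(5/128)βb³ + (3/16)cb + (3/128)αb⁴ + (1/4)d, C = (3/8)α, D = (1/4)a + (5/16)βb − (3/16)αb², E = (3/8)αb² + (5/4)βb + (1/4)a, K = (5/32)βb² + (1/4)ab − (1/16)αb³ + (1/4)c, L = (5/4)β + (3/4)αb. If deg[F,G] < 5, then either (1) there exist R, S, M, N, K̃, L̃, B̃, D̃ ∈ ℂ such that the polynomial identities x = R·F̄₁ + S·h and z = M·F̄₁ + N·h hold in ℂ[x,y,z], G₃ = K̃·h³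 + L̃·h²·F̄₁, and G₂ = B̃·h² + C·F̄₁² + D̃·h·F̄₁; or (2) there exist f, e ∈ ℂ such that F̄₁ = f·h, F₂ = f·h², G₄ = (E + (3/2)αf)·h⁴, G₃ = (K + Lf)·h³ + (3/2)α·h²·x, G₂ = A·h·x + (B + Cf² + Df)·h², and, with M = ((3/4)K − (3/4)bD)f + (1/4)e + (1/4)(3bC − (1/2)L)f², one has M ≠ 0 and the identity M·h = z − (E − (3/4)bA + (3/4)αf)·x in ℂ[x,y,z]. -/

import Mathlib

open MvPolynomial

/-!
Each Jacobian minor of `{F, G}` splits as a part of degree at most 2 plus `4 h² W`, where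
`W = J(h, P) h + J(h, Q) F̄ - (3/4) α J(h, F̄) x` for explicit linear forms `P = topFormP …`,
`Q = topFormQ …`; the constants `A, C, D, E, L` are chosen so that all parts of degree at
least 4 cancel. Since `4 h² W` is homogeneous of degree 3, `deg[F, G] < 5` forces `W = 0`.
For linear forms the minors `J(h, ·)` are constants, so `W = 0` is linear algebra. If some
`J(h, F̄) ≠ 0`, then `h, F̄` are independent, `W = 0` puts `x` in their span, and comparing the
coefficients of `h` and `F̄` in `W = 0` puts `z` there as well. Otherwise `F̄ = f h`, `W` reduces
to `J(h, P + f Q) h`, and `P + f Q` is a multiple of `h`: this is the relation between `h`, `x`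
and `z` of the second alternative.
-/

noncomputable def jacMinor (f g : MvPolynomial (Fin 3) ℂ) (i j : Fin 3) :
    MvPolynomial (Fin 3) ℂ :=
  pderiv i f * pderiv j g - pderiv j f * pderiv i g

namespace MvPolynomial

variable {σ R : Type*}

theorem IsHomogeneous.eq_C_coeff_zero [CommSemiring R] {p : MvPolynomial σ R}
    (hp : p.IsHomogeneous 0) : p = C (coeff 0 p) :=
  totalDegree_eq_zero_iff_eq_C.mp ((totalDegree_zero_iff_isHomogeneous σ).mpr hp)

theorem IsHomogeneous.eq_zero_of_totalDegree_add_lt [CommRing R] {g w : MvPolynomial σ R}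
    {n : ℕ} (hw : w.IsHomogeneous n) (hg : g.totalDegree < n) (hgw : (g + w).totalDegree < n) :
    w = 0 := by
  by_contra hw0
  have : w.totalDegree < n :=
    calc w.totalDegree = (g + w - g).totalDegree := by rw [add_sub_cancel_left]
      _ ≤ max (g + w).totalDegree g.totalDegree := totalDegree_sub _ _
      _ < n := max_lt hgw hg
  exact this.ne (hw.totalDegree hw0)

end MvPolynomial

section jacMinor

variable (p q r : MvPolynomial (Fin 3) ℂ) (i j : Fin 3)

theorem jacMinor_self : jacMinor p p i j = 0 := by
  unfold jacMinor; ring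

theorem jacMinor_swap : jacMinor q p i j = -jacMinor p q i j := by
  unfold jacMinor; ring

theorem jacMinor_zero_left : jacMinor 0 q i j = 0 := by
  simp [jacMinor]

theorem jacMinor_zero_right : jacMinor p 0 i j = 0 := by
  simp [jacMinor]

theorem jacMinor_add_right : jacMinor p (q + r) i j = jacMinor p q i j + jacMinor p r i j := by
  simp only [jacMinor, map_add]; ring

theorem jacMinor_sub_right : jacMinor p (q - r) i j = jacMinor p q i j - jacMinor p r i j := by
  simp only [jacMinor, map_sub]; ring

theorem jacMinor_C_mul_right (a : ℂ) : jacMinor p (C a * q) i j = C a * jacMinor p q i j := by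
  simp only [jacMinor, pderiv_C_mul]; ring

end jacMinor

theorem MvPolynomial.IsHomogeneous.jacMinor {p q : MvPolynomial (Fin 3) ℂ} {m n : ℕ}
    (hp : p.IsHomogeneous m) (hq : q.IsHomogeneous n) (i j : Fin 3) :
    (jacMinor p q i j).IsHomogeneous (m - 1 + (n - 1)) :=
  (hp.pderiv.mul hq.pderiv).sub (hp.pderiv.mul hq.pderiv)

theorem eq_zero_of_mul_add_mul_eq_zero {p q u v : MvPolynomial (Fin 3) ℂ} {i j : Fin 3}
    (hu : u.IsHomogeneous 0) (hv : v.IsHomogeneous 0) (hpq : jacMinor p q i j ≠ 0)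
    (h : u * p + v * q = 0) : u = 0 ∧ v = 0 := by
  rw [hu.eq_C_coeff_zero, hv.eq_C_coeff_zero] at h ⊢
  have hJp := congrArg (jacMinor p · i j) h
  have hJq := congrArg (jacMinor q · i j) h
  simp only [jacMinor_add_right, jacMinor_C_mul_right, jacMinor_self, jacMinor_zero_right,
    jacMinor_swap p q] at hJp hJq
  constructor
  · simpa [hpq] using hJq
  · simpa [hpq] using hJp

theorem exists_eq_C_mul_of_jacMinor_eq_zero {p q : MvPolynomial (Fin 3) ℂ}
    (hp : p.IsHomogeneous 1) (hq : q.IsHomogeneous 1) (hp0 : p ≠ 0)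
    (hpq : ∀ i j, jacMinor p q i j = 0) : ∃ s, q = C s * p := by
  have euler {r : MvPolynomial (Fin 3) ℂ} (hr : r.IsHomogeneous 1) :
      ∑ i, X i * pderiv i r = r := by
    simpa using hr.sum_X_mul_pderiv
  obtain ⟨k, hk⟩ : ∃ k, pderiv k p ≠ 0 := by
    by_contra! h
    exact hp0 (by rw [← euler hp]; simp [h])
  have ha : pderiv k p = C (coeff 0 (pderiv k p)) := hp.pderiv.eq_C_coeff_zero
  have hb : pderiv k q = C (coeff 0 (pderiv k q)) := hq.pderiv.eq_C_coeff_zero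
  set a := coeff 0 (pderiv k p)
  set b := coeff 0 (pderiv k q)
  have ha0 : a ≠ 0 := by rintro h0; exact hk (by rw [ha, h0, map_zero])
  have hcoef (j : Fin 3) : pderiv j q = C (b / a) * pderiv j p := by
    have := hpq k j
    rw [jacMinor, ha, hb] at this
    refine mul_left_cancel₀ (show C a ≠ 0 by simpa using ha0) ?_
    rw [← mul_assoc, ← map_mul, mul_div_cancel₀ _ ha0]
    linear_combination this
  refine ⟨b / a, ?_⟩
  rw [← euler hq, ← euler hp, Finset.mul_sum]
  exact Finset.sum_congr rfl fun j _ => by rw [hcoef]; ring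

theorem exists_eq_of_jacMinor_ne_zero {h q x P Q : MvPolynomial (Fin 3) ℂ} {γ : ℂ}
    (hh : h.IsHomogeneous 1) (hq : q.IsHomogeneous 1) (hP : P.IsHomogeneous 1)
    (hQ : Q.IsHomogeneous 1) (hγ : γ ≠ 0)
    (hW : ∀ i j, jacMinor h P i j * h + jacMinor h Q i j * q = C γ * jacMinor h q i j * x)
    {i₀ j₀ : Fin 3} (hhq : jacMinor h q i₀ j₀ ≠ 0) :
    ∃ R S t : ℂ, x = C R * q + C S * h ∧ P = C (γ * S) * q + C t * h := by
  obtain ⟨R, S, hx⟩ : ∃ R S : ℂ, x = C R * q + C S * h := by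
    have hc := (hh.jacMinor hq i₀ j₀).eq_C_coeff_zero
    set c := coeff 0 (jacMinor h q i₀ j₀)
    have hγc : γ * c ≠ 0 := mul_ne_zero hγ fun h0 => hhq (by rw [hc, h0, map_zero])
    have h₀ := hW i₀ j₀
    rw [(hh.jacMinor hP i₀ j₀).eq_C_coeff_zero, (hh.jacMinor hQ i₀ j₀).eq_C_coeff_zero, hc,
      ← map_mul] at h₀
    refine ⟨coeff 0 (jacMinor h Q i₀ j₀) / (γ * c), coeff 0 (jacMinor h P i₀ j₀) / (γ * c), ?_⟩
    refine mul_left_cancel₀ (show C (γ * c) ≠ 0 by simpa using hγc) ?_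
    simp only [mul_add, ← mul_assoc, ← map_mul, mul_div_cancel₀ _ hγc]
    linear_combination -h₀
  have hPq : ∀ i j, jacMinor h (P - C (γ * S) * q) i j = 0 := fun i j =>
    (eq_zero_of_mul_add_mul_eq_zero (hh.jacMinor (hP.sub (hq.C_mul _)) i j)
      ((hh.jacMinor hQ i j).sub ((hh.jacMinor hq i j).C_mul (γ * R))) hhq (by
        rw [jacMinor_sub_right, jacMinor_C_mul_right, map_mul, map_mul]
        linear_combination hW i j + C γ * jacMinor h q i j * hx)).1
  have hh0 : h ≠ 0 := by rintro rfl; exact hhq (jacMinor_zero_left _ _ _)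
  obtain ⟨t, ht⟩ := exists_eq_C_mul_of_jacMinor_eq_zero hh (hP.sub (hq.C_mul _)) hh0 hPq
  exact ⟨R, S, t, hx, by linear_combination ht⟩

theorem exists_add_C_mul_eq_C_mul {h P Q x : MvPolynomial (Fin 3) ℂ} {f γ : ℂ}
    (hh : h.IsHomogeneous 1) (hP : P.IsHomogeneous 1) (hQ : Q.IsHomogeneous 1) (hh0 : h ≠ 0)
    (hW : ∀ i j, jacMinor h P i j * h + jacMinor h Q i j * (C f * h) =
      C γ * jacMinor h (C f * h) i j * x) :
    ∃ t : ℂ, P + C f * Q = C t * h := by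
  refine exists_eq_C_mul_of_jacMinor_eq_zero hh (hP.add (hQ.C_mul f)) hh0 fun i j => ?_
  have hWij := hW i j
  rw [jacMinor_C_mul_right, jacMinor_self] at hWij
  rw [jacMinor_add_right, jacMinor_C_mul_right]
  refine (mul_eq_zero.mp ?_).resolve_right hh0
  linear_combination hWij

noncomputable def topFormP (b A D E K : ℂ) (q : MvPolynomial (Fin 3) ℂ) :
    MvPolynomial (Fin 3) ℂ :=
  X 2 - C (E - 3 / 4 * b * A) * X 0 - C (3 / 4 * (K - b * D)) * q

noncomputable def topFormQ (α b CC L : ℂ) (q : MvPolynomial (Fin 3) ℂ) :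
    MvPolynomial (Fin 3) ℂ :=
  C (3 / 2 * b * CC - 1 / 4 * L) * q - C (3 / 4 * α) * X 0

theorem isHomogeneous_topFormP {q : MvPolynomial (Fin 3) ℂ} (hq : q.IsHomogeneous 1)
    (b A D E K : ℂ) : (topFormP b A D E K q).IsHomogeneous 1 :=
  ((isHomogeneous_X ℂ 2).sub ((isHomogeneous_X ℂ 0).C_mul _)).sub (hq.C_mul _)

theorem isHomogeneous_topFormQ {q : MvPolynomial (Fin 3) ℂ} (hq : q.IsHomogeneous 1)
    (α b CC L : ℂ) : (topFormQ α b CC L q).IsHomogeneous 1 :=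
  (hq.C_mul _).sub ((isHomogeneous_X ℂ 0).C_mul _)

theorem totalDegree_jacMinor_add_lt {F2 F3 G2 G3 : MvPolynomial (Fin 3) ℂ}
    (hF2 : F2.IsHomogeneous 2) (hF3 : F3.IsHomogeneous 3) (hG2 : G2.IsHomogeneous 2)
    (hG3 : G3.IsHomogeneous 3) (i j : Fin 3) :
    (jacMinor (X 0) (X 2) i j + jacMinor (X 0) G2 i j + jacMinor F2 (X 2) i j
      + jacMinor (X 0) G3 i j + jacMinor F2 G2 i j + jacMinor F3 (X 2) i j).totalDegree < 3 := by
  have mem {p q : MvPolynomial (Fin 3) ℂ} {m n : ℕ} (hp : p.IsHomogeneous m)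
      (hq : q.IsHomogeneous n) (hmn : m - 1 + (n - 1) ≤ 2) :
      jacMinor p q i j ∈ restrictTotalDegree (Fin 3) ℂ 2 :=
    (mem_restrictTotalDegree _ _ _).2 ((hp.jacMinor hq i j).totalDegree_le.trans hmn)
  have hx := isHomogeneous_X ℂ (0 : Fin 3)
  have hz := isHomogeneous_X ℂ (2 : Fin 3)
  rw [Nat.lt_succ_iff, ← mem_restrictTotalDegree]
  refine add_mem (add_mem (add_mem (add_mem (add_mem ?_ ?_) ?_) ?_) ?_) ?_ <;>
    exact mem (by assumption) (by assumption) (by norm_num)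

theorem jacMinor_expansion {F2 F3 F4 G2 G3 G4 G5 G6 h q : MvPolynomial (Fin 3) ℂ}
    {α β a b A B CC D E K L : ℂ}
    (hA : A = (5 / 4) * β + (3 / 4) * α * b) (hC : CC = (3 / 8) * α)
    (hD : D = (1 / 4) * a + (5 / 16) * β * b - (3 / 16) * α * b ^ 2)
    (hE : E = (3 / 8) * α * b ^ 2 + (5 / 4) * β * b + (1 / 4) * a)
    (hL : L = (5 / 4) * β + (3 / 4) * α * b)
    (hF4eq : F4 = h ^ 4) (hG6eq : G6 = C α * h ^ 6)
    (hF2eq : F2 = h * q) (hF3eq : F3 = C b * h ^ 3)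
    (hG5eq : G5 = C ((3 / 2) * α * b + β) * h ^ 5)
    (hG4eq : G4 = C E * h ^ 4 + C ((3 / 2) * α) * h ^ 3 * q)
    (hG3eq : G3 = C K * h ^ 3 + C L * h ^ 2 * q + C ((3 / 2) * α) * h ^ 2 * X 0)
    (hG2eq : G2 = C A * h * X 0 + C B * h ^ 2 + C CC * q ^ 2 + C D * h * q) (i j : Fin 3) :
    jacMinor (X 0 + F2 + F3 + F4) (X 2 + G2 + G3 + G4 + G5 + G6) i j =
      jacMinor (X 0) (X 2) i j + jacMinor (X 0) G2 i j + jacMinor F2 (X 2) i j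
        + jacMinor (X 0) G3 i j + jacMinor F2 G2 i j + jacMinor F3 (X 2) i j
        + 4 * h ^ 2 * (jacMinor h (topFormP b A D E K q) i j * h
          + jacMinor h (topFormQ α b CC L q) i j * q - C (3 / 4 * α) * jacMinor h q i j * X 0) := by
  subst hF4eq hG6eq hF2eq hF3eq hG5eq hG4eq hG3eq hG2eq hA hC hD hE hL
  simp only [jacMinor, topFormP, topFormQ, map_add, map_sub, pderiv_mul, pderiv_pow, pderiv_C,
    Nat.cast_ofNat, zero_mul, add_zero, zero_add]
  -- after evaluation the rational constants live in the field `ℂ`, where `ring` handles them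
  refine MvPolynomial.funext fun v => ?_
  simp only [map_add, map_sub, map_mul, eval_C, map_pow, map_ofNat]
  ring

theorem jacMinor_topForm_relation {F2 F3 F4 G2 G3 G4 G5 G6 h q : MvPolynomial (Fin 3) ℂ}
    {α β a b A B CC D E K L : ℂ}
    (hF2 : F2.IsHomogeneous 2) (hF3 : F3.IsHomogeneous 3) (hG2 : G2.IsHomogeneous 2)
    (hG3 : G3.IsHomogeneous 3) (hh : h ≠ 0) (hhhom : h.IsHomogeneous 1)
    (hq : q.IsHomogeneous 1)
    (hA : A = (5 / 4) * β + (3 / 4) * α * b) (hC : CC = (3 / 8) * α)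
    (hD : D = (1 / 4) * a + (5 / 16) * β * b - (3 / 16) * α * b ^ 2)
    (hE : E = (3 / 8) * α * b ^ 2 + (5 / 4) * β * b + (1 / 4) * a)
    (hL : L = (5 / 4) * β + (3 / 4) * α * b)
    (hF4eq : F4 = h ^ 4) (hG6eq : G6 = C α * h ^ 6)
    (hF2eq : F2 = h * q) (hF3eq : F3 = C b * h ^ 3)
    (hG5eq : G5 = C ((3 / 2) * α * b + β) * h ^ 5)
    (hG4eq : G4 = C E * h ^ 4 + C ((3 / 2) * α) * h ^ 3 * q)
    (hG3eq : G3 = C K * h ^ 3 + C L * h ^ 2 * q + C ((3 / 2) * α) * h ^ 2 * X 0)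
    (hG2eq : G2 = C A * h * X 0 + C B * h ^ 2 + C CC * q ^ 2 + C D * h * q)
    (hbr : ∀ i j : Fin 3,
      (jacMinor (X 0 + F2 + F3 + F4) (X 2 + G2 + G3 + G4 + G5 + G6) i j).totalDegree < 3)
    (i j : Fin 3) :
    jacMinor h (topFormP b A D E K q) i j * h + jacMinor h (topFormQ α b CC L q) i j * q =
      C (3 / 4 * α) * jacMinor h q i j * X 0 := by
  have hW := (((hhhom.jacMinor (isHomogeneous_topFormP hq b A D E K) i j).mul hhhom).add
    ((hhhom.jacMinor (isHomogeneous_topFormQ hq α b CC L) i j).mul hq)).sub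
    (((hhhom.jacMinor hq i j).C_mul (3 / 4 * α)).mul (isHomogeneous_X ℂ 0))
  have h4 : (4 : MvPolynomial (Fin 3) ℂ).IsHomogeneous 0 := by
    rw [← map_ofNat C 4]; exact isHomogeneous_C _ _
  have htop := ((h4.mul (hhhom.pow 2)).mul hW).eq_zero_of_totalDegree_add_lt
    (totalDegree_jacMinor_add_lt hF2 hF3 hG2 hG3 i j) (by
      rw [← jacMinor_expansion hA hC hD hE hL hF4eq hG6eq hF2eq hF3eq hG5eq hG4eq hG3eq hG2eq]
      exact hbr i j)
  simpa [hh, sub_eq_zero] using htop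

theorem exists_C_mul_eq_of_topForm_eq {h : MvPolynomial (Fin 3) ℂ} {α b A CC D E K L f t : ℂ}
    (ht : topFormP b A D E K (C f * h) + C f * topFormQ α b CC L (C f * h) = C t * h) :
    ∃ M ≠ 0, C M * h = X 2 - C (E - 3 / 4 * b * A + 3 / 4 * α * f) * X 0 := by
  have hM : C (t + 3 / 4 * (K - b * D) * f - (3 / 2 * b * CC - 1 / 4 * L) * f ^ 2) * h =
      X 2 - C (E - 3 / 4 * b * A + 3 / 4 * α * f) * X 0 := by
    simp only [topFormP, topFormQ, map_add, map_sub, map_mul, map_pow] at ht ⊢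
    linear_combination -ht
  refine ⟨_, fun hM0 => ?_, hM⟩
  rw [hM0, map_zero, zero_mul] at hM
  simpa using congrArg (eval ![0, 0, 1]) hM

theorem stmt15_general (F2 F3 F4 G2 G3 G4 G5 G6 h F1bar : MvPolynomial (Fin 3) ℂ)
    (α β a b A B CC D E K L : ℂ)
    (hF2 : F2.IsHomogeneous 2) (hF3 : F3.IsHomogeneous 3)
    (hG2 : G2.IsHomogeneous 2) (hG3 : G3.IsHomogeneous 3)
    (hh : h ≠ 0) (hhhom : h.IsHomogeneous 1) (hF1bar : F1bar.IsHomogeneous 1) (hα : α ≠ 0)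
    (hA : A = (5 / 4) * β + (3 / 4) * α * b)
    (hC : CC = (3 / 8) * α)
    (hD : D = (1 / 4) * a + (5 / 16) * β * b - (3 / 16) * α * b ^ 2)
    (hE : E = (3 / 8) * α * b ^ 2 + (5 / 4) * β * b + (1 / 4) * a)
    (hL : L = (5 / 4) * β + (3 / 4) * α * b)
    (hF4eq : F4 = h ^ 4) (hG6eq : G6 = C α * h ^ 6)
    (hF2eq : F2 = h * F1bar) (hF3eq : F3 = C b * h ^ 3)
    (hG5eq : G5 = C ((3 / 2) * α * b + β) * h ^ 5)
    (hG4eq : G4 = C E * h ^ 4 + C ((3 / 2) * α) * h ^ 3 * F1bar)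
    (hG3eq : G3 = C K * h ^ 3 + C L * h ^ 2 * F1bar + C ((3 / 2) * α) * h ^ 2 * X 0)
    (hG2eq : G2 = C A * h * X 0 + C B * h ^ 2 + C CC * F1bar ^ 2 + C D * h * F1bar)
    (hbr : ∀ i j : Fin 3, (jacMinor (X 0 + F2 + F3 + F4) (X 2 + G2 + G3 + G4 + G5 + G6) i j).totalDegree < 3) :
    (∃ R S M N Kt Lt Bt Dt : ℂ,
      (X 0 : MvPolynomial (Fin 3) ℂ) = C R * F1bar + C S * h ∧
      (X 2 : MvPolynomial (Fin 3) ℂ) = C M * F1bar + C N * h ∧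
      G3 = C Kt * h ^ 3 + C Lt * h ^ 2 * F1bar ∧
      G2 = C Bt * h ^ 2 + C CC * F1bar ^ 2 + C Dt * h * F1bar) ∨
    (∃ f e : ℂ,
      F1bar = C f * h ∧ F2 = C f * h ^ 2 ∧
      G4 = C (E + (3 / 2) * α * f) * h ^ 4 ∧
      G3 = C (K + L * f) * h ^ 3 + C ((3 / 2) * α) * h ^ 2 * X 0 ∧
      G2 = C A * h * X 0 + C (B + CC * f ^ 2 + D * f) * h ^ 2 ∧
      ((3 / 4) * K - (3 / 4) * b * D) * f + (1 / 4) * e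
        + (1 / 4) * (3 * b * CC - (1 / 2) * L) * f ^ 2 ≠ 0 ∧
      C (((3 / 4) * K - (3 / 4) * b * D) * f + (1 / 4) * e
          + (1 / 4) * (3 * b * CC - (1 / 2) * L) * f ^ 2) * h
        = X 2 - C (E - (3 / 4) * b * A + (3 / 4) * α * f) * X 0) := by
  have hW := jacMinor_topForm_relation hF2 hF3 hG2 hG3 hh hhhom hF1bar hA hC hD hE hL
    hF4eq hG6eq hF2eq hF3eq hG5eq hG4eq hG3eq hG2eq hbr
  have hP := isHomogeneous_topFormP hF1bar b A D E K
  have hQ := isHomogeneous_topFormQ hF1bar α b CC L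
  by_cases hdep : ∀ i j, jacMinor h F1bar i j = 0
  · right
    obtain ⟨f, rfl⟩ := exists_eq_C_mul_of_jacMinor_eq_zero hhhom hF1bar hh hdep
    obtain ⟨t, ht⟩ := exists_add_C_mul_eq_C_mul hhhom hP hQ hh hW
    obtain ⟨M, hM0, hM⟩ := exists_C_mul_eq_of_topForm_eq ht
    obtain ⟨e, rfl⟩ : ∃ e : ℂ, ((3 / 4) * K - (3 / 4) * b * D) * f + (1 / 4) * e
        + (1 / 4) * (3 * b * CC - (1 / 2) * L) * f ^ 2 = M :=
      ⟨4 * (M - ((3 / 4) * K - (3 / 4) * b * D) * f - (1 / 4) * (3 * b * CC - (1 / 2) * L) * f ^ 2),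
        by ring⟩
    refine ⟨f, e, rfl, by rw [hF2eq]; ring, ?_, ?_, ?_, hM0, hM⟩
    · rw [hG4eq]; simp only [map_add, map_mul]; ring
    · rw [hG3eq]; simp only [map_add, map_mul]; ring
    · rw [hG2eq]; simp only [map_add, map_mul, map_pow]; ring
  · left
    obtain ⟨i₀, j₀, hne⟩ : ∃ i j, jacMinor h F1bar i j ≠ 0 := by simpa using hdep
    obtain ⟨R, S, t, hx, hPt⟩ :=
      exists_eq_of_jacMinor_ne_zero hhhom hF1bar hP hQ (by simpa using hα) hW hne
    refine ⟨R, S, 3 / 4 * α * S + (E - 3 / 4 * b * A) * R + 3 / 4 * (K - b * D),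
      t + (E - 3 / 4 * b * A) * S, K + 3 / 2 * α * S, L + 3 / 2 * α * R, B + A * S, D + A * R,
      hx, ?_, ?_, ?_⟩
    · simp only [topFormP, map_add, map_mul] at hPt ⊢
      linear_combination hPt + C (E - 3 / 4 * b * A) * hx
    · rw [hG3eq, hx]; simp only [map_add, map_mul]; ring
    · rw [hG2eq, hx]; simp only [map_add, map_mul]; ring

theorem stmt15 (F2 F3 F4 G2 G3 G4 G5 G6 h F1bar : MvPolynomial (Fin 3) ℂ)
    (α β a b c d A B CC D E K L : ℂ)
    (hF2 : F2.IsHomogeneous 2) (hF3 : F3.IsHomogeneous 3) (hF4 : F4.IsHomogeneous 4)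
    (hG2 : G2.IsHomogeneous 2) (hG3 : G3.IsHomogeneous 3) (hG4 : G4.IsHomogeneous 4)
    (hG5 : G5.IsHomogeneous 5) (hG6 : G6.IsHomogeneous 6)
    (hh : h ≠ 0) (hhhom : h.IsHomogeneous 1) (hF1bar : F1bar.IsHomogeneous 1) (hα : α ≠ 0)
    (hA : A = (5 / 4) * β + (3 / 4) * α * b)
    (hB : B = -(5 / 128) * β * b ^ 3 + (3 / 16) * c * b + (3 / 128) * α * b ^ 4 + (1 / 4) * d)
    (hC : CC = (3 / 8) * α)
    (hD : D = (1 / 4) * a + (5 / 16) * β * b - (3 / 16) * α * b ^ 2)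
    (hE : E = (3 / 8) * α * b ^ 2 + (5 / 4) * β * b + (1 / 4) * a)
    (hK : K = (5 / 32) * β * b ^ 2 + (1 / 4) * a * b - (1 / 16) * α * b ^ 3 + (1 / 4) * c)
    (hL : L = (5 / 4) * β + (3 / 4) * α * b)
    (hF4eq : F4 = h ^ 4) (hG6eq : G6 = C α * h ^ 6)
    (hF2eq : F2 = h * F1bar) (hF3eq : F3 = C b * h ^ 3)
    (hG5eq : G5 = C ((3 / 2) * α * b + β) * h ^ 5)
    (hG4eq : G4 = C E * h ^ 4 + C ((3 / 2) * α) * h ^ 3 * F1bar)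
    (hG3eq : G3 = C K * h ^ 3 + C L * h ^ 2 * F1bar + C ((3 / 2) * α) * h ^ 2 * X 0)
    (hG2eq : G2 = C A * h * X 0 + C B * h ^ 2 + C CC * F1bar ^ 2 + C D * h * F1bar)
    (hbr : ∀ i j : Fin 3, (jacMinor (X 0 + F2 + F3 + F4) (X 2 + G2 + G3 + G4 + G5 + G6) i j).totalDegree < 3) :
    (∃ R S M N Kt Lt Bt Dt : ℂ,
      (X 0 : MvPolynomial (Fin 3) ℂ) = C R * F1bar + C S * h ∧
      (X 2 : MvPolynomial (Fin 3) ℂ) = C M * F1bar + C N * h ∧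
      G3 = C Kt * h ^ 3 + C Lt * h ^ 2 * F1bar ∧
      G2 = C Bt * h ^ 2 + C CC * F1bar ^ 2 + C Dt * h * F1bar) ∨
    (∃ f e : ℂ,
      F1bar = C f * h ∧ F2 = C f * h ^ 2 ∧
      G4 = C (E + (3 / 2) * α * f) * h ^ 4 ∧
      G3 = C (K + L * f) * h ^ 3 + C ((3 / 2) * α) * h ^ 2 * X 0 ∧
      G2 = C A * h * X 0 + C (B + CC * f ^ 2 + D * f) * h ^ 2 ∧
      ((3 / 4) * K - (3 / 4) * b * D) * f + (1 / 4) * e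
        + (1 / 4) * (3 * b * CC - (1 / 2) * L) * f ^ 2 ≠ 0 ∧
      C (((3 / 4) * K - (3 / 4) * b * D) * f + (1 / 4) * e
          + (1 / 4) * (3 * b * CC - (1 / 2) * L) * f ^ 2) * h
        = X 2 - C (E - (3 / 4) * b * A + (3 / 4) * α * f) * X 0) :=
  stmt15_general F2 F3 F4 G2 G3 G4 G5 G6 h F1bar α β a b A B CC D E K L hF2 hF3 hG2 hG3 hh hhhom
    hF1bar hα hA hC hD hE hL hF4eq hG6eq hF2eq hF3eq hG5eq hG4eq hG3eq hG2eq hbr
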